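/- arXiv:2209.07724 — 5 statements merged into one kernel-verified Lean document; each statement's English description precedes it below -/
import Mathlib

section
/- Let x/a and y/b be positive Farey neighbors (ay - bx = 1) with a ≥ 1. If a > 1 then ⌈(x+y)/(a+b)⌉ = ⌈x/a⌉, and if a = 1 then ⌈(x+y)/(a+b)⌉ = ⌈x/a⌉ + 1. In both cases ⌈(x+y)/(a+b)⌉ = ⌊x/a + 1⌋. -/
/-!
Farey neighbours satisfy `a (x + y) = x (a + b) + 1`, so the mediant exceeds `x / a` by
`1 / (a (a + b)) ≤ 1 / a` and lies in `(x / a, (x + 1) / a]`. Since `x + 1 ≤ a (⌊x / a⌋ + 1)`, that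
interval lies in `(⌊x / a⌋, ⌊x / a⌋ + 1]`, so the mediant has ceiling `⌊x / a⌋ + 1 = ⌊x / a + 1⌋`.
This equals `⌈x / a⌉` unless `a ∣ x`, and `a ∣ b x + 1` rules that out for `a > 1`.
-/

section FloorRing

variable {K : Type*} [Field K] [LinearOrder K] [IsStrictOrderedRing K] [FloorRing K]

theorem Int.ceil_eq_floor_add_one_of_lt_of_le {r s : K} (hrs : r < s) (hs : s ≤ ⌊r⌋ + 1) :
    ⌈s⌉ = ⌊r⌋ + 1 :=
  le_antisymm (Int.ceil_le.2 (mod_cast hs)) (Int.floor_lt_ceil_of_lt hrs)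

theorem add_one_div_le_floor_div_add_one (x : ℤ) {a : ℕ} (ha : 0 < a) :
    ((x : K) + 1) / a ≤ ⌊(x : K) / a⌋ + 1 := by
  have ha' : (0 : K) < a := by exact_mod_cast ha
  have hlt : (x : K) < a * (⌊(x : K) / a⌋ + 1) := by
    rw [← div_lt_iff₀' ha']
    exact Int.lt_floor_add_one _
  have hle : x + 1 ≤ a * (⌊(x : K) / a⌋ + 1) := by exact_mod_cast hlt
  rw [div_le_iff₀' ha']
  exact_mod_cast hle

theorem ceil_natCast_div_eq_floor_add_one {x a : ℕ} (ha : 0 < a) (hax : ¬ a ∣ x) :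
    ⌈(x : K) / a⌉ = ⌊(x : K) / a⌋ + 1 := by
  rw [Int.ceil_eq_floor_add_one_iff_notMem]
  rintro ⟨n, hn⟩
  have hxn : ((x : ℤ) : K) = n * a := by
    rw [hn]
    push_cast
    field_simp
  exact hax (Int.natCast_dvd_natCast.1 ⟨n, by rw [mul_comm]; exact_mod_cast hxn⟩)

end FloorRing

section Mediant

variable {K : Type*} [Field K] [LinearOrder K] [IsStrictOrderedRing K] {x a y b : K}

theorem div_lt_mediant (ha : 0 < a) (hab : 0 < a + b) (h : a * y = b * x + 1) :
    x / a < (x + y) / (a + b) := by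
  rw [div_lt_div_iff₀ ha hab]
  linear_combination -h

theorem mediant_le_add_one_div (ha : 0 < a) (hab : 1 ≤ a + b) (h : a * y = b * x + 1) :
    (x + y) / (a + b) ≤ (x + 1) / a := by
  rw [div_le_div_iff₀ (by linarith) ha]
  linear_combination h + hab

end Mediant

theorem Nat.not_dvd_of_mul_eq_mul_add_one {x a y b : ℕ} (ha : 1 < a) (h : a * y = b * x + 1) :
    ¬ a ∣ x := by
  intro hax
  have : a ∣ 1 := (Nat.dvd_add_right (hax.mul_left b)).1 (h ▸ dvd_mul_right a y)
  exact ha.ne' (Nat.dvd_one.1 this)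

theorem farey_sum_ceil_general (x a y b : ℕ) (ha : 1 ≤ a)
    (h : a * y = b * x + 1) :
    ((1 < a → ⌈((x : ℚ) + y) / ((a : ℚ) + b)⌉ = ⌈(x : ℚ) / a⌉) ∧
      (a = 1 → ⌈((x : ℚ) + y) / ((a : ℚ) + b)⌉ = ⌈(x : ℚ) / a⌉ + 1)) ∧
    ⌈((x : ℚ) + y) / ((a : ℚ) + b)⌉ = ⌊(x : ℚ) / a + 1⌋ := by
  have ha' : (0 : ℚ) < a := by exact_mod_cast ha
  have hab : (1 : ℚ) ≤ a + b := by exact_mod_cast le_add_right ha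
  have hq : (a : ℚ) * y = b * x + 1 := by exact_mod_cast h
  have hfloor := add_one_div_le_floor_div_add_one (K := ℚ) x ha
  push_cast at hfloor
  have hceil : ⌈((x : ℚ) + y) / ((a : ℚ) + b)⌉ = ⌊(x : ℚ) / a⌋ + 1 :=
    Int.ceil_eq_floor_add_one_of_lt_of_le (div_lt_mediant ha' (by linarith) hq)
      ((mediant_le_add_one_div ha' hab hq).trans hfloor)
  refine ⟨⟨fun ha1 => ?_, fun ha1 => ?_⟩, by rw [hceil, Int.floor_add_one]⟩
  · rw [hceil, ceil_natCast_div_eq_floor_add_one ha (Nat.not_dvd_of_mul_eq_mul_add_one ha1 h)]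
  · subst ha1
    simpa using hceil

/-- For positive Farey neighbors `x/a`, `y/b` (with `ay - bx = 1`): if `a > 1` then
`⌈(x+y)/(a+b)⌉ = ⌈x/a⌉`, if `a = 1` then `⌈(x+y)/(a+b)⌉ = ⌈x/a⌉ + 1`, and in both
cases `⌈(x+y)/(a+b)⌉ = ⌊x/a + 1⌋`. -/
theorem farey_sum_ceil (x a y b : ℕ) (hx : 0 < x) (hy : 0 < y) (ha : 1 ≤ a) (hb : 0 < b)
    (h : a * y = b * x + 1) :
    ((1 < a → ⌈((x : ℚ) + y) / ((a : ℚ) + b)⌉ = ⌈(x : ℚ) / a⌉) ∧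
      (a = 1 → ⌈((x : ℚ) + y) / ((a : ℚ) + b)⌉ = ⌈(x : ℚ) / a⌉ + 1)) ∧
    ⌈((x : ℚ) + y) / ((a : ℚ) + b)⌉ = ⌊(x : ℚ) / a + 1⌋ :=
  farey_sum_ceil_general x a y b ha h
end

section
/- For any pair (a, x) of coprime integers with 1 ≤ a ≤ x, the degree of (x - a, a)_q equals the degree of (a, x)_q minus 1 (when x > a). -/
/-!
Induction along the recursion defining `(a, b)_q` shows that it has nonnegative coefficients and
that its degree is the sum `s(a, b)` of the partial quotients of `b / a`: in both recursive steps
the two summands have nonnegative coefficients, so nothing cancels, and the second summand, of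
degree `s(a, b)`, dominates the first. Since `s` is symmetric and `s(a, x) = s(a, x - a) + 1`,
the degrees of `(x - a, a)_q` and `(a, x)_q` differ by one.
-/

open Polynomial

/-- The `q`-integer `[c]_q = 1 + q + ⋯ + q^{c-1}` as a polynomial in `ℤ[q]`. -/
noncomputable def qInt (c : ℕ) : Polynomial ℤ := ∑ i ∈ Finset.range c, X ^ i

/-- The polynomial `(a, b)_q ∈ ℤ[q]` associated to a pair of coprime positive
integers: `(1, n)_q = (n, 1)_q = [n+1]_q`; if `a < b` then
`(a,b)_q = (a-r, r)_q + q·(a, b-a)_q` with `r = b % a`; if `a > b` then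
`(a,b)_q = (a-b, b)_q + q^⌈a/b⌉·(r, b-r)_q` with `r = a % b`.
(Values on non-coprime or zero inputs are junk.) -/
noncomputable def W : ℕ → ℕ → Polynomial ℤ
  | 1, b => qInt (b + 1)
  | a, 1 => qInt (a + 1)
  | 0, _ => 0
  | _, 0 => 0
  | a + 2, b + 2 =>
    if a < b then
      W (a + 2 - (b + 2) % (a + 2)) ((b + 2) % (a + 2)) + X * W (a + 2) (b - a)
    else
      W (a - b) (b + 2) +
        X ^ ((a + 2 + (b + 2) - 1) / (b + 2)) *
          W ((a + 2) % (b + 2)) (b + 2 - (a + 2) % (b + 2))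
  termination_by a b => a + b
  decreasing_by
  · have := Nat.mod_lt (b + 2) (show 0 < a + 2 by omega); omega
  · omega
  · omega
  · have := Nat.mod_lt (a + 2) (show 0 < b + 2 by omega); omega

/-- The sequence of digits of the negative continued fraction expansion
`x/a = [c₁, …, c_l]⁻` (each `cᵢ = ⌈·⌉` of the current fraction). By convention
`ncfDigits x 0 = []` (for `1/0 = ∞`) and `ncfDigits x 1 = [x]`. -/
def ncfDigits : ℕ → ℕ → List ℕ
  | _, 0 => []
  | x, 1 => [x]
  | x, a + 2 =>
      (x + (a + 2) - 1) / (a + 2) ::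
        ncfDigits (a + 2) ((x + (a + 2) - 1) / (a + 2) * (a + 2) - x)
  termination_by x a => a
  decreasing_by
    have := Nat.div_mul_le_self (x + (a + 2) - 1) (a + 2); omega

/-- The (coprime) numerator and denominator of the Morier-Genoud–Ovsienko
`q`-deformation of the negative continued fraction `[c₁, …, c_l]⁻`, computed by
the continuant recursion `(N, D) ↦ ([c]_q·N - q^{c-1}·D, N)`, with `(1, 0)` for
the empty list. -/
noncomputable def qCF : List ℕ → Polynomial ℤ × Polynomial ℤ
  | [] => (1, 0)
  | c :: rest =>
      let p := qCF rest
      (qInt c * p.1 - X ^ (c - 1) * p.2, p.1)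

/-- Numerator `N_q(x/a)` of the Morier-Genoud–Ovsienko `q`-rational `[x/a]_q`. -/
noncomputable def Nq (x a : ℕ) : Polynomial ℤ := (qCF (ncfDigits x a)).1

/-- Denominator `D_q(x/a)` of the Morier-Genoud–Ovsienko `q`-rational `[x/a]_q`. -/
noncomputable def Dq (x a : ℕ) : Polynomial ℤ := (qCF (ncfDigits x a)).2

/-- The normalized Jones polynomial `J_{x/a}(q) = q·N_q(x/a) + (1-q)·D_q(x/a)`. -/
noncomputable def Jq (x a : ℕ) : Polynomial ℤ := X * Nq x a + (1 - X) * Dq x a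


section NonnegCoeff

variable {R : Type*} [Semiring R] [PartialOrder R] {p q : R[X]}

lemma coeff_add_nonneg [IsOrderedAddMonoid R] (hp : ∀ n, 0 ≤ p.coeff n)
    (hq : ∀ n, 0 ≤ q.coeff n) (n : ℕ) : 0 ≤ (p + q).coeff n := by
  rw [coeff_add]
  exact add_nonneg (hp n) (hq n)

lemma coeff_X_pow_mul_nonneg (hq : ∀ n, 0 ≤ q.coeff n) (c n : ℕ) :
    0 ≤ (X ^ c * q).coeff n := by
  rw [coeff_X_pow_mul']
  split_ifs
  exacts [hq _, le_rfl]

lemma natDegree_add_of_coeff_nonneg [IsOrderedAddMonoid R] (hp : ∀ n, 0 ≤ p.coeff n)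
    (hq : ∀ n, 0 ≤ q.coeff n) : (p + q).natDegree = max p.natDegree q.natDegree := by
  refine le_antisymm (natDegree_add_le p q) ?_
  wlog hpq : p.natDegree ≤ q.natDegree generalizing p q
  · rw [add_comm, max_comm]
    exact this hq hp (le_of_not_ge hpq)
  rw [max_eq_right hpq]
  rcases eq_or_ne q 0 with rfl | hq0
  · simp
  refine le_natDegree_of_ne_zero fun h ↦ hq0 ?_
  rw [coeff_add, add_eq_zero_iff_of_nonneg (hp _) (hq _)] at h
  exact leadingCoeff_eq_zero.mp h.2

lemma coeff_nonneg_and_natDegree_add_X_pow_mul [IsOrderedAddMonoid R] [Nontrivial R]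
    {dp dq c : ℕ} (hp : (∀ n, 0 ≤ p.coeff n) ∧ p.natDegree = dp)
    (hq : (∀ n, 0 ≤ q.coeff n) ∧ q.natDegree = dq) (hdq : 0 < dq) (hd : dp ≤ dq + c) :
    (∀ n, 0 ≤ (p + X ^ c * q).coeff n) ∧ (p + X ^ c * q).natDegree = dq + c := by
  obtain ⟨hp, rfl⟩ := hp
  obtain ⟨hq, rfl⟩ := hq
  refine ⟨coeff_add_nonneg hp (coeff_X_pow_mul_nonneg hq c), ?_⟩
  rw [natDegree_add_of_coeff_nonneg hp (coeff_X_pow_mul_nonneg hq c),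
    natDegree_X_pow_mul c (ne_zero_of_natDegree_gt hdq), max_eq_right hd]

end NonnegCoeff

lemma coeff_qInt (c k : ℕ) : (qInt c).coeff k = if k < c then 1 else 0 := by
  simp [qInt, finsetSum_coeff, coeff_X_pow, Finset.sum_ite_eq]

lemma coeff_nonneg_and_natDegree_qInt (c : ℕ) :
    (∀ n, 0 ≤ (qInt (c + 1)).coeff n) ∧ (qInt (c + 1)).natDegree = c := by
  refine ⟨fun n ↦ ?_, le_antisymm (natDegree_le_iff_coeff_eq_zero.mpr fun k hk ↦ ?_)
    (le_natDegree_of_ne_zero ?_)⟩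
  · rw [coeff_qInt]
    split_ifs <;> norm_num
  · rw [coeff_qInt, if_neg (by omega)]
  · rw [coeff_qInt, if_pos (by omega)]
    exact one_ne_zero

lemma add_sub_one_div_eq_div_add_one {a b : ℕ} (hb : 0 < b) (hr : 0 < a % b) :
    (a + b - 1) / b = a / b + 1 := by
  have := Nat.div_add_mod a b
  have := Nat.mod_lt a hb
  refine Nat.div_eq_of_lt_le ?_ ?_
  · rw [add_mul, one_mul, mul_comm]
    omega
  · rw [add_mul, add_mul, one_mul, mul_comm]
    omega

lemma Nat.Coprime.mod_pos {a b : ℕ} (h : a.Coprime b) (ha : 1 < a) : 0 < b % a :=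
  Nat.pos_of_ne_zero fun h0 ↦ ha.ne' (h.eq_one_of_dvd (Nat.dvd_of_mod_eq_zero h0))

/-- The sum of the partial quotients of the regular continued fraction of `b / a`, i.e. of the
quotients in the Euclidean algorithm on `(b, a)`. -/
def partialQuotientSum : ℕ → ℕ → ℕ
  | 0, _ => 0
  | a + 1, b => b / (a + 1) + partialQuotientSum (b % (a + 1)) (a + 1)
  decreasing_by exact Nat.mod_lt _ a.succ_pos

section PartialQuotientSum

variable {a b : ℕ}

@[simp]
lemma partialQuotientSum_zero_left (b : ℕ) : partialQuotientSum 0 b = 0 := by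
  rw [partialQuotientSum]

lemma partialQuotientSum_of_pos (ha : 0 < a) (b : ℕ) :
    partialQuotientSum a b = b / a + partialQuotientSum (b % a) a := by
  obtain ⟨a, rfl⟩ := Nat.exists_eq_add_of_lt ha
  rw [partialQuotientSum]

lemma partialQuotientSum_comm (a b : ℕ) : partialQuotientSum a b = partialQuotientSum b a := by
  wlog hab : a < b generalizing a b
  · rcases (le_of_not_gt hab).eq_or_lt with rfl | hba
    · rfl
    · exact (this b a hba).symm
  rw [partialQuotientSum_of_pos (by omega : 0 < b), Nat.div_eq_of_lt hab, Nat.mod_eq_of_lt hab,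
    zero_add]

@[simp]
lemma partialQuotientSum_zero_right (a : ℕ) : partialQuotientSum a 0 = 0 := by
  rw [partialQuotientSum_comm, partialQuotientSum_zero_left]

lemma partialQuotientSum_one_left (b : ℕ) : partialQuotientSum 1 b = b := by
  rw [partialQuotientSum_of_pos one_pos, Nat.div_one, Nat.mod_one, partialQuotientSum_zero_left,
    add_zero]

lemma partialQuotientSum_sub_add_one (ha : 0 < a) (hab : a ≤ b) :
    partialQuotientSum a (b - a) + 1 = partialQuotientSum a b := by
  obtain ⟨c, rfl⟩ := Nat.exists_eq_add_of_le' hab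
  rw [Nat.add_sub_cancel, partialQuotientSum_of_pos ha, partialQuotientSum_of_pos ha,
    Nat.add_div_right c ha, Nat.add_mod_right]
  omega

lemma partialQuotientSum_pos (ha : 0 < a) (hb : 0 < b) : 0 < partialQuotientSum a b := by
  wlog hab : a ≤ b generalizing a b
  · rw [partialQuotientSum_comm]
    exact this hb ha (by omega)
  rw [← partialQuotientSum_sub_add_one ha hab]
  exact Nat.succ_pos _

lemma partialQuotientSum_sub_mod_mod_le (a b : ℕ) :
    partialQuotientSum (a - b % a) (b % a) ≤ partialQuotientSum a b := by
  rcases Nat.eq_zero_or_pos a with rfl | ha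
  · simp
  rcases Nat.eq_zero_or_pos (b % a) with hr | hr
  · simp [hr]
  rw [partialQuotientSum_of_pos ha b,
    ← partialQuotientSum_sub_add_one hr (Nat.mod_lt b ha).le, partialQuotientSum_comm]
  exact le_add_left (Nat.le_succ _)

lemma partialQuotientSum_sub_left_le (a b : ℕ) :
    partialQuotientSum (a - b) b ≤ partialQuotientSum a b := by
  rcases Nat.eq_zero_or_pos b with rfl | hb
  · simp
  rcases le_or_gt b a with hba | hab
  · rw [partialQuotientSum_comm, partialQuotientSum_comm a,
      ← partialQuotientSum_sub_add_one hb hba]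
    exact Nat.le_succ _
  · simp [Nat.sub_eq_zero_of_le hab.le]

lemma partialQuotientSum_of_mod_pos (hr : 0 < a % b) :
    partialQuotientSum a b = partialQuotientSum (a % b) (b - a % b) + (a + b - 1) / b := by
  rcases Nat.eq_zero_or_pos b with rfl | hb
  · simp
  rw [partialQuotientSum_comm, partialQuotientSum_of_pos hb,
    ← partialQuotientSum_sub_add_one hr (Nat.mod_lt a hb).le, add_sub_one_div_eq_div_add_one hb hr]
  ring

end PartialQuotientSum

theorem W_coeff_nonneg_and_natDegree :
    ∀ {a b : ℕ}, a.Coprime b → 0 < a → 0 < b →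
      (∀ n, 0 ≤ (W a b).coeff n) ∧ (W a b).natDegree = partialQuotientSum a b
  | 1, b, _, _, _ => by
    rw [W.eq_1, partialQuotientSum_one_left]
    exact coeff_nonneg_and_natDegree_qInt b
  | a + 2, 1, _, _, _ => by
    rw [W.eq_2 _ (by omega), partialQuotientSum_comm, partialQuotientSum_one_left]
    exact coeff_nonneg_and_natDegree_qInt _
  | a + 2, b + 2, hco, _, _ => by
    rw [W.eq_5]
    split_ifs with hab
    · have hr := hco.mod_pos (by omega)
      have hrlt := Nat.mod_lt (b + 2) (by omega : 0 < a + 2)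
      have hsub : b - a = b + 2 - (a + 2) := by omega
      have hcoP : (a + 2 - (b + 2) % (a + 2)).Coprime ((b + 2) % (a + 2)) :=
        (Nat.coprime_sub_self_left hrlt.le).mpr
          (ZMod.coprime_mod_iff_coprime _ _ |>.mpr hco.symm).symm
      have hcoQ : (a + 2).Coprime (b - a) :=
        hsub ▸ (Nat.coprime_sub_self_right (by omega)).mpr hco
      rw [← pow_one X, ← partialQuotientSum_sub_add_one (by omega) (by omega : a + 2 ≤ b + 2),
        ← hsub]
      refine coeff_nonneg_and_natDegree_add_X_pow_mul
        (W_coeff_nonneg_and_natDegree hcoP (by omega) hr)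
        (W_coeff_nonneg_and_natDegree hcoQ (by omega) (by omega))
        (partialQuotientSum_pos (by omega) (by omega)) ?_
      rw [hsub, partialQuotientSum_sub_add_one (by omega) (by omega)]
      exact partialQuotientSum_sub_mod_mod_le _ _
    · have hr := hco.symm.mod_pos (by omega)
      have hrlt := Nat.mod_lt (a + 2) (by omega : 0 < b + 2)
      have hba : b < a := by
        rcases (not_lt.mp hab).eq_or_lt with rfl | h
        · simp at hr
        · exact h
      have hsub : a - b = a + 2 - (b + 2) := by omega
      have hcoP : (a - b).Coprime (b + 2) :=
        hsub ▸ (Nat.coprime_sub_self_left (by omega)).mpr hco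
      have hcoQ : ((a + 2) % (b + 2)).Coprime (b + 2 - (a + 2) % (b + 2)) :=
        (Nat.coprime_sub_self_right hrlt.le).mpr (ZMod.coprime_mod_iff_coprime _ _ |>.mpr hco)
      rw [partialQuotientSum_of_mod_pos hr]
      refine coeff_nonneg_and_natDegree_add_X_pow_mul
        (W_coeff_nonneg_and_natDegree hcoP (by omega) (by omega))
        (W_coeff_nonneg_and_natDegree hcoQ hr (by omega))
        (partialQuotientSum_pos hr (by omega)) ?_
      rw [← partialQuotientSum_of_mod_pos hr, hsub]
      exact partialQuotientSum_sub_left_le _ _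
  termination_by a b => a + b
  decreasing_by all_goals omega

/-- For coprime `1 ≤ a ≤ x` with `x > a`: `deg (x-a, a)_q = deg (a, x)_q - 1`. -/
theorem W_natDegree_pred (a x : ℕ) (hco : Nat.Coprime a x) (ha : 1 ≤ a) (hax : a < x) :
    (W (x - a) a).natDegree + 1 = (W a x).natDegree := by
  have hco' : (x - a).Coprime a := (Nat.coprime_sub_self_left hax.le).mpr hco.symm
  rw [(W_coeff_nonneg_and_natDegree hco' (by omega) ha).2,
    (W_coeff_nonneg_and_natDegree hco ha (by omega)).2, partialQuotientSum_comm,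
    partialQuotientSum_sub_add_one ha hax.le]
end

section
/- Let (a, x) and (b, y) be pairs of coprime integers with 1 ≤ a ≤ x, 1 ≤ b ≤ y, and ay - bx = 1. Then deg (a+b, x+y)_q = deg (a, x)_q + ⌊b/a + 1⌋. -/
open Polynomial

/-!
For coprime `a, b` the degree of `(a, b)_q` is `sbDepth a b`, the number of steps of the
subtractive Euclidean algorithm on `(a, b)`, i.e. the depth of `a/b` in the Stern–Brocot tree:
in each branch of the recursion for `(a, b)_q` the second summand has degree exactly
`sbDepth a b` and the first one a smaller degree.

Farey neighbours `x/a < y/b` are the two parents of their mediant, so its depth is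
`max (sbDepth x a) (sbDepth y b) + 1`. If `b < a`, then `x/a` is the mediant of `y/b` and
`(x-y)/(a-b)`, so it is the deeper parent; if `a ≤ b`, then `y/b` is the mediant of `x/a` and
`(y-x)/(b-a)`, and induction on `b` gives `sbDepth y b = sbDepth x a + ⌊b/a⌋`.
-/

def sbDepth : ℕ → ℕ → ℕ
  | 0, _ => 0
  | _, 0 => 0
  | a + 1, b + 1 =>
    if a < b then sbDepth (a + 1) (b - a) + 1 else sbDepth (a - b) (b + 1) + 1

@[simp]
lemma sbDepth_zero_left (n : ℕ) : sbDepth 0 n = 0 := by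
  simp [sbDepth]

@[simp]
lemma sbDepth_zero_right (n : ℕ) : sbDepth n 0 = 0 := by
  cases n <;> simp [sbDepth]

lemma sbDepth_comm (a b : ℕ) : sbDepth a b = sbDepth b a := by
  fun_induction sbDepth a b with
  | case1 => simp
  | case2 => simp
  | case3 a b hab ih =>
    show _ = sbDepth (b + 1) (a + 1)
    rw [sbDepth, if_neg (by omega), ih]
  | case4 a b hab ih =>
    show _ = sbDepth (b + 1) (a + 1)
    rw [sbDepth]
    split_ifs with hba
    · rw [ih]
    · simp [show a = b by omega]

lemma sbDepth_add_self_left (m : ℕ) {n : ℕ} (hn : n ≠ 0) :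
    sbDepth (m + n) n = sbDepth m n + 1 := by
  obtain ⟨n, rfl⟩ := Nat.exists_eq_succ_of_ne_zero hn
  show sbDepth (m + n + 1) (n + 1) = _
  rw [sbDepth, if_neg (by omega), Nat.add_sub_cancel]

lemma sbDepth_add_self_right {m : ℕ} (hm : m ≠ 0) (n : ℕ) :
    sbDepth m (n + m) = sbDepth m n + 1 := by
  rw [sbDepth_comm, sbDepth_add_self_left n hm, sbDepth_comm]

lemma sbDepth_add_mul_left (m k : ℕ) {n : ℕ} (hn : n ≠ 0) :
    sbDepth (m + n * k) n = sbDepth m n + k := by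
  induction k with
  | zero => simp
  | succ k ih => rw [mul_add_one, ← add_assoc, sbDepth_add_self_left _ hn, ih, add_assoc]

lemma sbDepth_eq_mod_add_div (a : ℕ) {b : ℕ} (hb : b ≠ 0) :
    sbDepth a b = sbDepth (a % b) b + a / b := by
  conv_lhs => rw [← Nat.mod_add_div a b]
  exact sbDepth_add_mul_left _ _ hb

lemma sbDepth_one_right (n : ℕ) : sbDepth n 1 = n := by
  simpa using sbDepth_add_mul_left 0 n one_ne_zero

lemma sbDepth_one_left (n : ℕ) : sbDepth 1 n = n := by
  rw [sbDepth_comm, sbDepth_one_right]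

lemma sbDepth_sub_mod_lt {a b : ℕ} (ha : a ≠ 0) (hr : b % a ≠ 0) :
    sbDepth (a - b % a) (b % a) < sbDepth a b := by
  have hra : b % a ≤ a := (Nat.mod_lt b (Nat.pos_of_ne_zero ha)).le
  calc sbDepth (a - b % a) (b % a) < sbDepth (b % a) (a - b % a + b % a) := by
        rw [sbDepth_add_self_right hr, sbDepth_comm]; omega
    _ = sbDepth (b % a) a := by rw [Nat.sub_add_cancel hra]
    _ ≤ sbDepth b a := by rw [sbDepth_eq_mod_add_div b ha]; exact Nat.le_add_right _ _
    _ = sbDepth a b := sbDepth_comm b a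

lemma sbDepth_eq_ceil_div_add {a b : ℕ} (hb : b ≠ 0) (hr : a % b ≠ 0) :
    sbDepth a b = (a + b - 1) / b + sbDepth (a % b) (b - a % b) := by
  have hrb : a % b < b := Nat.mod_lt a (Nat.pos_of_ne_zero hb)
  have hceil : (a + b - 1) / b = a / b + 1 := by
    have := Nat.mod_add_div a b
    rw [show a + b - 1 = a % b - 1 + b * (a / b + 1) by rw [mul_add_one]; omega,
      Nat.add_mul_div_left _ _ (Nat.pos_of_ne_zero hb), Nat.div_eq_of_lt (by omega), zero_add]
  have hmod : sbDepth (a % b) b = sbDepth (a % b) (b - a % b) + 1 := by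
    rw [← sbDepth_add_self_right hr, Nat.sub_add_cancel hrb.le]
  rw [sbDepth_eq_mod_add_div a hb, hceil, hmod, sbDepth_comm (a % b)]
  ring

theorem sbDepth_mediant {a b x y : ℕ} (h : a * y = b * x + 1) :
    sbDepth (x + y) (a + b) = max (sbDepth x a) (sbDepth y b) + 1 := by
  obtain ⟨n, hn⟩ : ∃ n, a + b + x + y = n := ⟨_, rfl⟩
  induction n using Nat.strong_induction_on generalizing a b x y with | _ n ih =>
  wlog hle : a + b ≤ x + y generalizing a b x y
  · have hswap := this (a := y) (b := x) (x := b) (y := a) (by linarith) (by omega) (by omega)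
    rw [sbDepth_comm, add_comm a, add_comm x, hswap, sbDepth_comm b, sbDepth_comm a, max_comm]
  rcases b.eq_zero_or_pos with rfl | hb
  · obtain ⟨rfl, rfl⟩ : a = 1 ∧ y = 1 := by simpa using h
    simp [sbDepth_one_right]
  have ha : 0 < a := Nat.pos_of_ne_zero (by rintro rfl; omega)
  have hxa : a ≤ x := by
    by_contra! hxa
    nlinarith [Nat.mul_le_mul_left a (show b + 1 ≤ y by omega), Nat.mul_le_mul_left b hxa]
  have hyb : b ≤ y := by
    by_contra! hyb
    nlinarith [Nat.mul_le_mul_left a hyb, Nat.mul_le_mul_left b hxa]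
  have h' : a * (y - b) = b * (x - a) + 1 := by
    zify [hxa, hyb] at h ⊢; linear_combination h
  have hx : sbDepth x a = sbDepth (x - a) a + 1 := by
    rw [← sbDepth_add_self_left _ ha.ne', Nat.sub_add_cancel hxa]
  have hy : sbDepth y b = sbDepth (y - b) b + 1 := by
    rw [← sbDepth_add_self_left _ hb.ne', Nat.sub_add_cancel hyb]
  rw [show x + y = x - a + (y - b) + (a + b) by omega, sbDepth_add_self_left _ (by omega),
    ih _ (by omega) h' rfl, hx, hy, max_add_add_right]

theorem sbDepth_mediant_eq_add_div {a b x y : ℕ} (h : a * y = b * x + 1) :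
    sbDepth (x + y) (a + b) = sbDepth x a + (b / a + 1) := by
  have ha : 0 < a := Nat.pos_of_ne_zero (by rintro rfl; omega)
  rw [sbDepth_mediant h]
  rcases lt_or_ge b a with hba | hab
  · rw [Nat.div_eq_of_lt hba, max_eq_left]
    rcases b.eq_zero_or_pos with rfl | hb
    · simp
    have hyx : y ≤ x := by
      by_contra! hxy
      nlinarith [Nat.mul_le_mul_left a hxy, Nat.mul_le_mul_right x hba]
    have h' : (a - b) * y = b * (x - y) + 1 := by
      zify [hba.le, hyx] at h ⊢; linear_combination h
    have hx := sbDepth_mediant h'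
    rw [Nat.sub_add_cancel hyx, Nat.sub_add_cancel hba.le] at hx
    rw [hx]
    exact (le_max_right _ _).trans (Nat.le_succ _)
  · have hxy : x ≤ y := by
      by_contra! hyx
      nlinarith [Nat.mul_le_mul_right x hab]
    have h' : a * (y - x) = (b - a) * x + 1 := by
      zify [hab, hxy] at h ⊢; linear_combination h
    have hy := sbDepth_mediant_eq_add_div h'
    rw [Nat.add_sub_cancel' hxy, Nat.add_sub_cancel' hab, ← Nat.div_eq_sub_div ha hab] at hy
    rw [hy, max_eq_right (Nat.le_add_right _ _)]
    ring
termination_by b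

lemma degree_qInt_succ (n : ℕ) : (qInt (n + 1)).degree = n := by
  induction n with
  | zero => simp [qInt]
  | succ n ih =>
    rw [qInt, Finset.sum_range_succ, ← qInt, degree_add_eq_right_of_degree_lt, degree_X_pow]
    rw [ih, degree_X_pow]
    exact_mod_cast n.lt_succ_self

lemma degree_add_X_pow_mul {R : Type*} [Semiring R] [Nontrivial R] {p q : R[X]} {m n k : ℕ}
    (hp : p.degree = m) (hq : q.degree = n) (h : m < k + n) :
    (p + X ^ k * q).degree = ↑(k + n) := by
  have hXq : (X ^ k * q).degree = ↑(k + n) := by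
    rw [X_pow_mul, degree_mul_X_pow, hq, add_comm, Nat.cast_add]
  rw [degree_add_eq_right_of_degree_lt (by rw [hp, hXq]; exact_mod_cast h), hXq]

lemma W_one_left (b : ℕ) : W 1 b = qInt (b + 1) := by
  cases b <;> simp [W]

lemma W_one_right (a : ℕ) : W a 1 = qInt (a + 1) := by
  rcases a with _ | _ | a <;> simp [W]

lemma W_of_lt {a b : ℕ} (ha : 2 ≤ a) (hab : a < b) :
    W a b = W (a - b % a) (b % a) + X * W a (b - a) := by
  obtain ⟨a, rfl⟩ := Nat.exists_eq_add_of_le' ha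
  obtain ⟨b, rfl⟩ := Nat.exists_eq_add_of_le' (ha.trans hab.le)
  rw [W, if_pos (by omega)]
  congr 3
  omega

lemma W_of_gt {a b : ℕ} (hb : 2 ≤ b) (hba : b < a) :
    W a b = W (a - b) b + X ^ ((a + b - 1) / b) * W (a % b) (b - a % b) := by
  obtain ⟨b, rfl⟩ := Nat.exists_eq_add_of_le' hb
  obtain ⟨a, rfl⟩ := Nat.exists_eq_add_of_le' (hb.trans hba.le)
  rw [W, if_neg (by omega)]
  congr 2
  omega

theorem degree_W {a b : ℕ} (h : a.Coprime b) : (W a b).degree = sbDepth a b := by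
  rcases Nat.lt_or_ge a 2 with ha | ha
  · interval_cases a
    · obtain rfl : b = 1 := (Nat.coprime_zero_left b).mp h
      simpa [W_one_right] using degree_qInt_succ 0
    · rw [W_one_left, degree_qInt_succ, sbDepth_one_left]
  rcases Nat.lt_or_ge b 2 with hb | hb
  · interval_cases b
    · obtain rfl : a = 1 := (Nat.coprime_zero_right a).mp h
      omega
    · rw [W_one_right, degree_qInt_succ, sbDepth_one_right]
  rcases lt_or_gt_of_ne (show a ≠ b by rintro rfl; simp_all) with hab | hba
  · have hr : b % a ≠ 0 := fun h0 => by
      have := h.eq_one_of_dvd (Nat.dvd_of_mod_eq_zero h0); omega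
    have hra : b % a < a := Nat.mod_lt b (by omega)
    have h₁ : (a - b % a).Coprime (b % a) :=
      (Nat.coprime_sub_self_left hra.le).mpr (by rwa [Nat.Coprime, Nat.gcd_comm, ← Nat.gcd_rec])
    have h₂ : a.Coprime (b - a) := (Nat.coprime_sub_self_right hab.le).mpr h
    have hS : 1 + sbDepth a (b - a) = sbDepth a b := by
      rw [add_comm, ← sbDepth_add_self_right (by omega), Nat.sub_add_cancel hab.le]
    rw [W_of_lt ha hab, ← pow_one X, degree_add_X_pow_mul (degree_W h₁) (degree_W h₂)
      (hS ▸ sbDepth_sub_mod_lt (by omega) hr), hS]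
  · have hr : a % b ≠ 0 := fun h0 => by
      have := h.symm.eq_one_of_dvd (Nat.dvd_of_mod_eq_zero h0); omega
    have hrb : a % b < b := Nat.mod_lt a (by omega)
    have h₁ : (a - b).Coprime b := (Nat.coprime_sub_self_left hba.le).mpr h
    have h₂ : (a % b).Coprime (b - a % b) :=
      (Nat.coprime_sub_self_right hrb.le).mpr (by rw [Nat.Coprime, ← Nat.gcd_rec]; exact h.symm)
    have hS : sbDepth (a - b) b + 1 = sbDepth a b := by
      rw [← sbDepth_add_self_left _ (by omega), Nat.sub_add_cancel hba.le]
    have hceil := sbDepth_eq_ceil_div_add (by omega : b ≠ 0) hr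
    rw [W_of_gt hb hba, degree_add_X_pow_mul (degree_W h₁) (degree_W h₂) (by omega), ← hceil]
termination_by a + b

theorem natDegree_W {a b : ℕ} (h : a.Coprime b) : (W a b).natDegree = sbDepth a b :=
  natDegree_eq_of_degree_eq_some (degree_W h)

lemma Nat.Coprime.of_mul_eq_mul_add_one {a b x y : ℕ} (h : a * y = b * x + 1) : a.Coprime x := by
  refine Nat.isCoprime_iff_coprime.mp ⟨y, -b, ?_⟩
  have h' : (a : ℤ) * y = b * x + 1 := by exact_mod_cast h
  linear_combination h'

theorem W_natDegree_farey_left_general (a x b y : ℕ) (h : a * y = b * x + 1) :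
    (W (a + b) (x + y)).natDegree = (W a x).natDegree + (b / a + 1) := by
  have hmed : (a + b) * y = b * (x + y) + 1 := by rw [add_mul, h]; ring
  rw [natDegree_W (.of_mul_eq_mul_add_one hmed), natDegree_W (.of_mul_eq_mul_add_one h),
    sbDepth_comm, sbDepth_comm a, sbDepth_mediant_eq_add_div h]

/-- For Farey neighbors `x/a`, `y/b ≥ 1` (`ay - bx = 1`):
`deg (a+b, x+y)_q = deg (a, x)_q + ⌊b/a + 1⌋` (here `⌊b/a + 1⌋ = b/a + 1`). -/
theorem W_natDegree_farey_left (a x b y : ℕ)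
    (ha : 1 ≤ a) (hax : a ≤ x) (hb : 1 ≤ b) (hby : b ≤ y)
    (h : a * y = b * x + 1) :
    (W (a + b) (x + y)).natDegree = (W a x).natDegree + (b / a + 1) :=
  W_natDegree_farey_left_general a x b y h
end

section
/- Let α > 1 and β > 1 (or β = ∞ = 1/0) be Farey neighbors of rational numbers whose Farey sum has negative continued fraction expansion α♯β = [c₁, ..., c_l]⁻. Then c_l − 1 = ⌈N(α)/N(β)⌉, where N(α), N(β) are the numerators of α, β in lowest terms. -/
/-!
With `p/q = (x+y)/(a+b)` and `r/s = y/b`, the Farey relation reads `q·r = p·s + 1` with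
`r < p`, so `r` is the inverse of `q` modulo `p`; the claim is that the last digit of `p/q`
is `⌈p/r⌉`. One step of the expansion writes `p/q = c − R/q` with `c = ⌈p/q⌉`,
`R = c·q − p`, and the relation passes to `q/R` as `R·s = q·(c·s − r) + 1`, so by induction
the last digit is `⌈q/s⌉`. This equals `⌈p/r⌉` because `q/s − p/r = 1/(r·s)` and `p/r` is
not an integer. The induction ends at `q = 1`, where `r = 1` and the expansion is `[p]`.
-/

open Polynomial

lemma ncfDigits_of_two_le (p : ℕ) {q : ℕ} (hq : 2 ≤ q) :
    ncfDigits p q = p ⌈/⌉ q :: ncfDigits q (p ⌈/⌉ q * q - p) := by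
  obtain ⟨a, rfl⟩ := Nat.exists_eq_add_of_le' hq
  rw [ncfDigits]
  rfl

lemma ceilDiv_mul_sub_lt (p : ℕ) {q : ℕ} (hq : 0 < q) : p ⌈/⌉ q * q - p < q := by
  have := Nat.div_mul_le_self (p + q - 1) q
  rw [Nat.ceilDiv_eq_add_pred_div]
  omega

lemma lt_ceilDiv_mul (p : ℕ) {q : ℕ} (hq : 0 < q) (hpq : ¬ q ∣ p) : p < p ⌈/⌉ q * q := by
  refine lt_of_le_of_ne ?_ fun he => hpq ⟨_, he.trans (mul_comm _ _)⟩
  simpa [mul_comm] using le_smul_ceilDiv (b := p) hq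

lemma ceilDiv_eq_ceilDiv_of_mul_eq_mul_add_one {p q r s : ℕ} (h : q * r = p * s + 1)
    (hr : 2 ≤ r) : q ⌈/⌉ s = p ⌈/⌉ r := by
  have hs : 0 < s := Nat.pos_of_ne_zero fun hs => by simp [hs] at h; omega
  refine eq_of_forall_ge_iff fun k => ?_
  rw [ceilDiv_le_iff_le_mul hs, ceilDiv_le_iff_le_mul (by omega)]
  constructor <;> intro hk <;> nlinarith

lemma mul_sub_mul_eq_mul_sub_add_one {p q r s c : ℕ} (h : q * r = p * s + 1)
    (hc : p < c * q) (hs : 0 < s) : (c * q - p) * s = q * (c * s - r) + 1 := by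
  have hrc : r ≤ c * s := by nlinarith
  zify [hc.le, hrc] at h ⊢
  linear_combination h

theorem ncfDigits_getLast?_of_mul_eq_mul_add_one {p q r s : ℕ} (h : q * r = p * s + 1)
    (hqp : q < p) (hrp : r < p) : (ncfDigits p q).getLast? = some (p ⌈/⌉ r) := by
  induction q using Nat.strong_induction_on generalizing p r s with
  | _ q ih =>
  rcases (show q = 0 ∨ q = 1 ∨ 2 ≤ q by omega) with rfl | rfl | hq
  · simp at h
  · obtain rfl : s = 0 := by nlinarith
    obtain rfl : r = 1 := by omega
    simp [ncfDigits]
  have hs : 0 < s := Nat.pos_of_ne_zero fun hs => by simp [hs] at h; omega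
  have hsq : s < q := by nlinarith
  have hr : 2 ≤ r := by nlinarith
  have hndvd : ¬ q ∣ p := fun hd => by
    have := (Nat.dvd_add_right (dvd_mul_of_dvd_left hd s)).mp (h ▸ dvd_mul_right q r)
    rw [Nat.dvd_one] at this
    omega
  have hR := ceilDiv_mul_sub_lt p (by omega : 0 < q)
  rw [ncfDigits_of_two_le p hq, List.getLast?_cons,
    ih _ hR (mul_sub_mul_eq_mul_sub_add_one h (lt_ceilDiv_mul p (by omega) hndvd) hs) hR hsq,
    Option.getD_some,
    ceilDiv_eq_ceilDiv_of_mul_eq_mul_add_one h hr]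

theorem ncf_last_digit_general (x a y b : ℕ) (h : a * y = b * x + 1)
    (hax : a < x) :
    (ncfDigits (x + y) (a + b)).getLast? = some ((x + y - 1) / y + 1) := by
  have hy : 0 < y := Nat.pos_of_ne_zero fun hy => by simp [hy] at h
  have hby : b < y := by nlinarith
  have hsum : (a + b) * y = (x + y) * b + 1 := by linarith
  rw [ncfDigits_getLast?_of_mul_eq_mul_add_one hsum (by omega) (by omega),
    Nat.ceilDiv_eq_add_pred_div, show x + y + y - 1 = x + y - 1 + y by omega,
    Nat.add_div_right _ hy]

/-- For Farey neighbors `α = x/a > 1` and `β = y/b > 1` (or `β = 1/0`), the last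
digit `c_l` of the negative continued fraction expansion of the Farey sum
`(x+y)/(a+b)` satisfies `c_l − 1 = ⌈N(α)/N(β)⌉ = ⌈x/y⌉` (here `⌈x/y⌉ = (x + y - 1)/y`). -/
theorem ncf_last_digit (x a y b : ℕ) (h : a * y = b * x + 1)
    (ha : 1 ≤ a) (hax : a < x)
    (hβ : (1 ≤ b ∧ b < y) ∨ (b = 0 ∧ y = 1)) :
    (ncfDigits (x + y) (a + b)).getLast? = some ((x + y - 1) / y + 1) :=
  ncf_last_digit_general x a y b h hax
end

section
/- Define J_{x/a}(q) := q·N_q(x/a) + (1−q)·D_q(x/a) for a rational x/a > 1 in lowest terms. Then for Farey neighbors α, β > 1 (or β = 1/0), J_{α♯β}(q) = J_α(q) + q^{⌈N(α)/N(β)⌉}·J_β(q), where N denotes the numerator; moreover J₁(q) = 1 and J_∞(q) = q. -/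
open Polynomial

/-! For `a ≥ 2`, the Farey neighbours `x/a < y/b` and their mediant share the first digit
`c = ⌈x/a⌉` of their negative continued fractions; stripping it leaves the Farey neighbours
`a/(ca - x)` and `b/(cb - y)`, whose mediant is the stripped mediant. The continuant step
`(N, D) ↦ ([c]_q N - q^{c-1} D, N)` is linear over `ℤ[q]`, so the relation
`(N_q, D_q)(α♯β) = (N_q, D_q)(α) + q^k (N_q, D_q)(β)` lifts from the tails, and the exponent
`k = ⌈x/y⌉ = ⌈a/b⌉` does not change. Induction on `x` thus ends at `α = x/1`, where
`β = (bx+1)/b = [x+1, 2, …, 2]⁻` is computed directly. Finally `J_q` is linear in `(N_q, D_q)`. -/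

lemma qInt_zero : qInt 0 = 0 := Finset.sum_range_zero _

lemma qInt_one : qInt 1 = 1 := by simp [qInt]

lemma qInt_succ (n : ℕ) : qInt (n + 1) = qInt n + X ^ n := Finset.sum_range_succ _ _

lemma qInt_succ' (n : ℕ) : qInt (n + 1) = 1 + X * qInt n := by
  simp only [qInt, geom_sum_succ, add_comm]

lemma qCF_cons (c : ℕ) (L : List ℕ) :
    qCF (c :: L) = (qInt c * (qCF L).1 - X ^ (c - 1) * (qCF L).2, (qCF L).1) := rfl

lemma qCF_cons_eq_add_smul {L L₁ L₂ : List ℕ} {r : ℤ[X]} (c : ℕ)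
    (h : qCF L = qCF L₁ + r • qCF L₂) : qCF (c :: L) = qCF (c :: L₁) + r • qCF (c :: L₂) := by
  rw [qCF_cons, h]
  refine Prod.ext ?_ rfl
  simp only [qCF_cons, Prod.fst_add, Prod.snd_add, Prod.smul_fst, Prod.smul_snd, smul_eq_mul]
  ring

namespace Nat

lemma le_mul_ceilDiv {x a : ℕ} (ha : 0 < a) : x ≤ a * (x ⌈/⌉ a) :=
  (ceilDiv_le_iff_le_mul ha).1 le_rfl

lemma mul_ceilDiv_lt {x a : ℕ} (ha : 0 < a) : a * (x ⌈/⌉ a) < x + a := by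
  have := Nat.div_mul_le_self (x + a - 1) a
  rw [ceilDiv_eq_add_pred_div, mul_comm]
  omega

lemma ceilDiv_eq_of_le_of_lt {x a c : ℕ} (h₁ : x ≤ a * c) (h₂ : a * c < x + a) :
    x ⌈/⌉ a = c := by
  rw [ceilDiv_eq_add_pred_div]
  exact Nat.div_eq_of_lt_le (by rw [mul_comm]; omega) (by rw [mul_comm, mul_add_one]; omega)

lemma ceilDiv_eq_ceilDiv_of_forall {x a y b : ℕ} (ha : 0 < a) (hb : 0 < b)
    (h : ∀ n, x ≤ a * n ↔ y ≤ b * n) : x ⌈/⌉ a = y ⌈/⌉ b :=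
  eq_of_forall_ge_iff fun n => by
    rw [ceilDiv_le_iff_le_mul ha, ceilDiv_le_iff_le_mul hb, h]

end Nat

lemma ncfDigits_zero (x : ℕ) : ncfDigits x 0 = [] := by rw [ncfDigits]

lemma ncfDigits_of_pos {x a : ℕ} (ha : 0 < a) :
    ncfDigits x a = x ⌈/⌉ a :: ncfDigits a (a * (x ⌈/⌉ a) - x) := by
  obtain rfl | ⟨a, rfl⟩ : a = 1 ∨ ∃ n, a = n + 2 := by
    rcases a with _ | _ | a <;> simp_all
  · simp [ncfDigits, ncfDigits_zero]
  · rw [ncfDigits, Nat.ceilDiv_eq_add_pred_div, mul_comm]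

lemma ncfDigits_eq_cons {x a c : ℕ} (h₁ : x ≤ a * c) (h₂ : a * c < x + a) :
    ncfDigits x a = c :: ncfDigits a (a * c - x) := by
  have ha : 0 < a := Nat.pos_of_ne_zero (by rintro rfl; omega)
  rw [ncfDigits_of_pos ha, Nat.ceilDiv_eq_of_le_of_lt h₁ h₂]

lemma qCF_ncfDigits_zero (x : ℕ) : qCF (ncfDigits x 0) = (1, 0) := by
  rw [ncfDigits_zero, qCF]

lemma qCF_ncfDigits_one (x : ℕ) : qCF (ncfDigits x 1) = (qInt x, 1) := by
  simp [ncfDigits_of_pos, qCF_cons, qCF_ncfDigits_zero]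

lemma qCF_ncfDigits_succ_self (m : ℕ) : qCF (ncfDigits (m + 1) m) = (qInt (m + 1), qInt m) := by
  induction m with
  | zero => rw [qCF_ncfDigits_zero, qInt_one, qInt_zero]
  | succ m ih =>
    rw [ncfDigits_eq_cons (c := 2) (by omega) (by omega), show (m + 1) * 2 - (m + 1 + 1) = m by omega,
      qCF_cons, ih, qInt_succ' 1, qInt_one, qInt_succ (m + 1), qInt_succ m]
    refine Prod.ext ?_ rfl
    simp only
    ring

lemma qCF_ncfDigits_mul_add_one (x : ℕ) {b : ℕ} (hb : 0 < b) :
    qCF (ncfDigits (b * x + 1) b) = (qInt (x + 1) * qInt b - X ^ x * qInt (b - 1), qInt b) := by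
  obtain ⟨m, rfl⟩ : ∃ m, b = m + 1 := ⟨b - 1, by omega⟩
  rw [ncfDigits_eq_cons (c := x + 1) (by rw [mul_add_one]; omega) (by rw [mul_add_one]; omega),
    show (m + 1) * (x + 1) - ((m + 1) * x + 1) = m by rw [mul_add_one]; omega,
    qCF_cons, qCF_ncfDigits_succ_self, Nat.add_sub_cancel, Nat.add_sub_cancel]

lemma qCF_ncfDigits_mediant_of_den_one (x : ℕ) {b : ℕ} (hb : 0 < b) :
    qCF (ncfDigits ((b + 1) * x + 1) (b + 1)) =
      qCF (ncfDigits x 1) + (X : ℤ[X]) • qCF (ncfDigits (b * x + 1) b) := by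
  obtain ⟨m, rfl⟩ : ∃ m, b = m + 1 := ⟨b - 1, by omega⟩
  rw [qCF_ncfDigits_mul_add_one x (by omega), qCF_ncfDigits_mul_add_one x hb, qCF_ncfDigits_one,
    Nat.add_sub_cancel, Nat.add_sub_cancel, qInt_succ' (m + 1), qInt_succ' m, qInt_succ x]
  refine Prod.ext ?_ (by simp)
  simp only [Prod.fst_add, Prod.smul_fst, smul_eq_mul]
  ring

lemma coprime_of_farey {x a y b : ℕ} (h : a * y = b * x + 1) : a.Coprime x ∧ b.Coprime y := by
  have hz : (a * y : ℤ) = b * x + 1 := by exact_mod_cast h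
  exact ⟨Nat.isCoprime_iff_coprime.mp ⟨y, -b, by linear_combination hz⟩,
    Nat.isCoprime_iff_coprime.mp ⟨-x, a, by linear_combination hz⟩⟩

lemma farey_tail {x a y b c : ℕ} (h : a * y = b * x + 1) (hx : x ≤ a * c) (hy : y ≤ b * c) :
    (a * c - x) * b = (b * c - y) * a + 1 := by
  have hz : (a * y : ℤ) = b * x + 1 := by exact_mod_cast h
  zify [hx, hy]
  linear_combination hz

lemma farey_le_mul_iff {x a y b : ℕ} (h : a * y = b * x + 1) (ha : 2 ≤ a) (hb : 0 < b) (n : ℕ) :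
    x ≤ a * n ↔ y ≤ b * n := by
  constructor
  · intro hx
    have hne : x ≠ a * n := fun e => by
      have := (coprime_of_farey h).1.eq_one_of_dvd ⟨n, e⟩
      omega
    have := Nat.mul_le_mul_left b (show x + 1 ≤ a * n by omega)
    refine Nat.le_of_mul_le_mul_left ?_ (by omega : 0 < a)
    nlinarith
  · intro hy
    by_contra
    nlinarith

lemma farey_ceilDiv_eq {x a y b : ℕ} (h : a * y = b * x + 1) (hb : 0 < b) (hy : 2 ≤ y) :
    x ⌈/⌉ y = a ⌈/⌉ b :=
  Nat.ceilDiv_eq_ceilDiv_of_forall (by omega) hb fun n => by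
    constructor <;> intro <;> by_contra <;> nlinarith

lemma add_ceilDiv_add {x a y b : ℕ} (ha : 0 < a) (hb : 0 < b) (h : ∀ n, x ≤ a * n ↔ y ≤ b * n) :
    (x + y) ⌈/⌉ (a + b) = x ⌈/⌉ a :=
  Nat.ceilDiv_eq_ceilDiv_of_forall (by omega) ha fun n => by
    rw [add_mul]
    have := h n
    omega

theorem qCF_ncfDigits_mediant (x a y b : ℕ) (h : a * y = b * x + 1) (ha : 1 ≤ a) (hax : a < x)
    (hβ : (1 ≤ b ∧ b < y) ∨ (b = 0 ∧ y = 1)) :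
    qCF (ncfDigits (x + y) (a + b)) =
      qCF (ncfDigits x a) + (X : ℤ[X]) ^ (x ⌈/⌉ y) • qCF (ncfDigits y b) := by
  rcases hβ with ⟨hb, hby⟩ | ⟨rfl, rfl⟩
  · obtain rfl | ha2 := ha.eq_or_lt
    · obtain rfl : y = b * x + 1 := by simpa using h
      rw [Nat.ceilDiv_eq_of_le_of_lt (c := 1) (by nlinarith) (by omega), pow_one,
        show x + (b * x + 1) = (b + 1) * x + 1 by ring, add_comm 1 b]
      exact qCF_ncfDigits_mediant_of_den_one x hb
    obtain ⟨c, hc⟩ : ∃ c, x ⌈/⌉ a = c := ⟨_, rfl⟩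
    have hle := farey_le_mul_iff h ha2 hb
    have ha0 : 0 < a := by omega
    have hcy : y ⌈/⌉ b = c := hc ▸ (Nat.ceilDiv_eq_ceilDiv_of_forall ha0 hb hle).symm
    have hcμ : (x + y) ⌈/⌉ (a + b) = c := hc ▸ add_ceilDiv_add ha0 hb hle
    have hxc : x < a * c := lt_of_le_of_ne (hc ▸ Nat.le_mul_ceilDiv ha0)
      fun e => by have := (coprime_of_farey h).1.eq_one_of_dvd ⟨c, e⟩; omega
    have hcx : a * c < x + a := hc ▸ Nat.mul_ceilDiv_lt ha0
    have hyc : y ≤ b * c := hcy ▸ Nat.le_mul_ceilDiv hb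
    have hcy' : b * c < y + b := hcy ▸ Nat.mul_ceilDiv_lt hb
    have hβ' : (1 ≤ b * c - y ∧ b * c - y < b) ∨ (b * c - y = 0 ∧ b = 1) := by
      rcases hyc.lt_or_eq with hlt | e
      · left; omega
      · exact .inr ⟨by omega, (coprime_of_farey h).2.eq_one_of_dvd ⟨c, e⟩⟩
    have IH := qCF_ncfDigits_mediant a (a * c - x) b (b * c - y) (farey_tail h hxc.le hyc)
      (by omega) (by omega) hβ'
    rw [← farey_ceilDiv_eq h hb (by omega),
      show a * c - x + (b * c - y) = (a + b) * c - (x + y) by rw [add_mul]; omega] at IH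
    rw [ncfDigits_of_pos (x := x + y) (by omega : 0 < a + b), ncfDigits_of_pos (x := x) ha,
      ncfDigits_of_pos hb, hc, hcy, hcμ]
    exact qCF_cons_eq_add_smul c IH
  · obtain rfl : a = 1 := by simpa using h
    rw [add_zero, qCF_ncfDigits_one, qCF_ncfDigits_one, qCF_ncfDigits_zero, ceilDiv_one,
      qInt_succ]
    simp
termination_by x

/-- With `J_{x/a}(q) = q·N_q(x/a) + (1-q)·D_q(x/a)`: for Farey neighbors
`α = x/a > 1` and `β = y/b > 1` (or `β = 1/0`),
`J_{α♯β}(q) = J_α(q) + q^{⌈N(α)/N(β)⌉}·J_β(q)` (here `⌈x/y⌉ = (x + y - 1)/y`);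
moreover `J₁(q) = 1` and `J_∞(q) = q`. -/
theorem Jq_farey (x a y b : ℕ) (h : a * y = b * x + 1)
    (ha : 1 ≤ a) (hax : a < x)
    (hβ : (1 ≤ b ∧ b < y) ∨ (b = 0 ∧ y = 1)) :
    Jq (x + y) (a + b) = Jq x a + X ^ ((x + y - 1) / y) * Jq y b ∧
    Jq 1 1 = 1 ∧ Jq 1 0 = X := by
  have hq := qCF_ncfDigits_mediant x a y b h ha hax hβ
  refine ⟨?_, ?_, ?_⟩
  · simp only [Jq, Nq, Dq, hq, Prod.fst_add, Prod.snd_add, Prod.smul_fst, Prod.smul_snd,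
      smul_eq_mul, Nat.ceilDiv_eq_add_pred_div]
    ring
  · simp [Jq, Nq, Dq, qCF_ncfDigits_one, qInt_one]
  · simp [Jq, Nq, Dq, qCF_ncfDigits_zero]
end
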